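/- Let d = 1, I = [-1/2,1/2] ⊂ ℝ, f = g = 1_I (the indicator function of I), h̄ = 2·1_{I×I}, and c(x,y) = (1/2)|x−y|². Define h : ℝ × ℝ → ℝ by h(x,y) = 2 if (x,y) ∈ ([-1/2,0]×[-1/2,0]) ∪ ([0,1/2]×[0,1/2]) and h(x,y) = 0 otherwise. Then h ∈ Γ(f,g)^h̄ and h minimizes I_c over Γ(f,g)^h̄: for every k ∈ Γ(f,g)^h̄, I_c(h) ≤ I_c(k). -/

import Mathlib

open MeasureTheory Filter Set Topology

noncomputable section

/-- The transportation cost `I_c(h) = ∫∫ c(x,y) h(x,y) dx dy` on `ℝ × ℝ`. -/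
def Icost1 (c h : ℝ × ℝ → ℝ) : ℝ :=
  ∫ p, c p * h p

/-- `h ∈ Γ(f,g)`: `h` is a nonnegative integrable joint density on `ℝ × ℝ`
with marginals `f` and `g`. -/
def InGamma1 (f g : ℝ → ℝ) (h : ℝ × ℝ → ℝ) : Prop :=
  Integrable h volume ∧ (∀ᵐ p ∂volume, 0 ≤ h p) ∧
    (∀ᵐ x ∂volume, (∫ y, h (x, y)) = f x) ∧
    (∀ᵐ y ∂volume, (∫ x, h (x, y)) = g y)

/-- `h ∈ Γ(f,g)^h̄`: `h ∈ Γ(f,g)` and `h` is dominated by `h̄` a.e. -/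
def InGammaBar1 (f g : ℝ → ℝ) (hbar h : ℝ × ℝ → ℝ) : Prop :=
  InGamma1 f g h ∧ ∀ᵐ p ∂volume, h p ≤ hbar p

/-!
Since `|x - y|² / 2 = x² / 2 + y² / 2 - x y` and the first two terms integrate against the
prescribed marginals, `I_c` is constant minus the correlation `∫ x y k` on `Γ(f,g)`. Among
densities `0 ≤ k ≤ h̄`, the integrand `x y k` is maximised pointwise by filling `h̄` exactly where
`x y ≥ 0`, and that set is the union of the two diagonal squares.
-/

lemma ae_eq_zero_off_of_le_indicator {X : Type*} [MeasurableSpace X] {μ : Measure X}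
    {K : Set X} {k g : X → ℝ} (h0 : ∀ᵐ x ∂μ, 0 ≤ k x)
    (hle : ∀ᵐ x ∂μ, k x ≤ K.indicator g x) : ∀ᵐ x ∂μ, x ∉ K → k x = 0 := by
  filter_upwards [h0, hle] with x hx0 hxle hxK
  rw [indicator_of_notMem hxK] at hxle
  exact le_antisymm hxle hx0

lemma Integrable.continuous_mul_of_ae_eq_zero_off {X : Type*} [MeasurableSpace X]
    [TopologicalSpace X] [T2Space X] [OpensMeasurableSpace X] {μ : Measure X} {K : Set X}
    {φ k : X → ℝ} (hK : IsCompact K)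
    (hφ : Continuous φ) (hk : Integrable k μ) (hkK : ∀ᵐ x ∂μ, x ∉ K → k x = 0) :
    Integrable (fun x => φ x * k x) μ := by
  have hk_eq : (fun x => φ x * k x) =ᵐ[μ] K.indicator fun x => φ x * k x := by
    filter_upwards [hkK] with x hx
    by_cases hxK : x ∈ K
    · rw [indicator_of_mem hxK]
    · rw [indicator_of_notMem hxK, hx hxK, mul_zero]
  refine Integrable.congr ?_ hk_eq.symm
  rw [integrable_indicator_iff hK.measurableSet]
  exact hk.integrableOn.continuousOn_mul hφ.continuousOn hK

section Marginals

variable {α β : Type*} [MeasurableSpace α] [MeasurableSpace β] {μ : Measure α} {ν : Measure β}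
  [SFinite μ] [SFinite ν] {k : α × β → ℝ}

lemma integral_comp_fst_mul_of_marginal {f φ : α → ℝ}
    (hint : Integrable (fun p => φ p.1 * k p) (μ.prod ν))
    (hf : ∀ᵐ x ∂μ, ∫ y, k (x, y) ∂ν = f x) :
    ∫ p, φ p.1 * k p ∂(μ.prod ν) = ∫ x, φ x * f x ∂μ := by
  rw [integral_prod _ hint]
  refine integral_congr_ae (hf.mono fun x hx => ?_)
  simp only [integral_const_mul, hx]

lemma integral_comp_snd_mul_of_marginal {g φ : β → ℝ}
    (hint : Integrable (fun p => φ p.2 * k p) (μ.prod ν))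
    (hg : ∀ᵐ y ∂ν, ∫ x, k (x, y) ∂μ = g y) :
    ∫ p, φ p.2 * k p ∂(μ.prod ν) = ∫ y, φ y * g y ∂ν := by
  rw [integral_prod_symm _ hint]
  refine integral_congr_ae (hg.mono fun y hy => ?_)
  simp only [integral_const_mul, hy]

end Marginals

lemma Icost1_half_sq_dist_eq {f g : ℝ → ℝ} {k : ℝ × ℝ → ℝ} {K : Set (ℝ × ℝ)} (hK : IsCompact K)
    (hk : InGamma1 f g k) (hkK : ∀ᵐ p, p ∉ K → k p = 0) :
    Icost1 (fun p => 1 / 2 * |p.1 - p.2| ^ 2) k =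
      (∫ x, x ^ 2 / 2 * f x) + (∫ y, y ^ 2 / 2 * g y) - ∫ p, p.1 * p.2 * k p := by
  obtain ⟨hk_int, -, hf, hg⟩ := hk
  have hint {φ : ℝ × ℝ → ℝ} (hφ : Continuous φ) : Integrable (fun p => φ p * k p) :=
    Integrable.continuous_mul_of_ae_eq_zero_off hK hφ hk_int hkK
  have h1 : Integrable (fun p : ℝ × ℝ => p.1 ^ 2 / 2 * k p) := hint (by fun_prop)
  have h2 : Integrable (fun p : ℝ × ℝ => p.2 ^ 2 / 2 * k p) := hint (by fun_prop)
  have h12 : Integrable (fun p : ℝ × ℝ => p.1 * p.2 * k p) := hint (by fun_prop)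
  have hexpand : (fun p : ℝ × ℝ => 1 / 2 * |p.1 - p.2| ^ 2 * k p) =
      fun p => p.1 ^ 2 / 2 * k p + p.2 ^ 2 / 2 * k p - p.1 * p.2 * k p := by
    ext p
    rw [sq_abs]
    ring
  have hfst : ∫ p : ℝ × ℝ, p.1 ^ 2 / 2 * k p = ∫ x, x ^ 2 / 2 * f x := by
    rw [Measure.volume_eq_prod] at h1 ⊢
    exact integral_comp_fst_mul_of_marginal (φ := fun x => x ^ 2 / 2) h1 hf
  have hsnd : ∫ p : ℝ × ℝ, p.2 ^ 2 / 2 * k p = ∫ y, y ^ 2 / 2 * g y := by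
    rw [Measure.volume_eq_prod] at h2 ⊢
    exact integral_comp_snd_mul_of_marginal (φ := fun y => y ^ 2 / 2) h2 hg
  have hsum : Integrable (fun p : ℝ × ℝ => p.1 ^ 2 / 2 * k p + p.2 ^ 2 / 2 * k p) := h1.add h2
  unfold Icost1
  rw [hexpand, integral_sub hsum h12, integral_add h1 h2, hfst, hsnd]

lemma mul_le_mul_indicator_inter_nonneg {X : Type*} {K : Set X} {q : X → ℝ} {M t : ℝ} {x : X}
    (ht0 : 0 ≤ t) (ht : t ≤ K.indicator (fun _ => M) x) :
    q x * t ≤ q x * (K ∩ {y | 0 ≤ q y}).indicator (fun _ => M) x := by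
  by_cases hxK : x ∈ K
  · rw [indicator_of_mem hxK] at ht
    by_cases hqx : 0 ≤ q x
    · rw [indicator_of_mem (mem_inter hxK hqx)]
      exact mul_le_mul_of_nonneg_left ht hqx
    · rw [indicator_of_notMem fun h => hqx h.2, mul_zero]
      exact mul_nonpos_of_nonpos_of_nonneg (le_of_not_ge hqx) ht0
  · rw [indicator_of_notMem hxK] at ht
    rw [indicator_of_notMem fun h => hxK h.1, le_antisymm ht ht0]

abbrev centeredUnitInterval : Set ℝ := Icc (-(1/2)) (1/2)

abbrev diagonalSquares : Set (ℝ × ℝ) :=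
  Icc (-(1/2)) 0 ×ˢ Icc (-(1/2)) 0 ∪ Icc 0 (1/2) ×ˢ Icc 0 (1/2)

lemma diagonalSquares_eq :
    diagonalSquares = centeredUnitInterval ×ˢ centeredUnitInterval ∩ {p | 0 ≤ p.1 * p.2} := by
  ext ⟨x, y⟩
  simp only [mem_union, mem_inter_iff, mem_prod, mem_Icc, mem_ofPred_eq, mul_nonneg_iff]
  constructor
  · rintro (⟨⟨_, _⟩, _, _⟩ | ⟨⟨_, _⟩, _, _⟩)
    · exact ⟨⟨⟨by linarith, by linarith⟩, by linarith, by linarith⟩, Or.inr ⟨by linarith, by linarith⟩⟩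
    · exact ⟨⟨⟨by linarith, by linarith⟩, by linarith, by linarith⟩, Or.inl ⟨by linarith, by linarith⟩⟩
  · rintro ⟨⟨⟨_, _⟩, _, _⟩, ⟨_, _⟩ | ⟨_, _⟩⟩
    · exact Or.inr ⟨⟨by linarith, by linarith⟩, by linarith, by linarith⟩
    · exact Or.inl ⟨⟨by linarith, by linarith⟩, by linarith, by linarith⟩

lemma integral_indicator_diagonalSquares_slice {x : ℝ} (hx : x ≠ 0) :
    ∫ y, diagonalSquares.indicator (fun _ => (2 : ℝ)) (x, y) =
      centeredUnitInterval.indicator (fun _ => 1) x := by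
  have hslice : (fun y => diagonalSquares.indicator (fun _ => (2 : ℝ)) (x, y)) =
      (Prod.mk x ⁻¹' diagonalSquares).indicator fun _ => 2 := rfl
  classical
  rw [hslice, integral_indicator_const _ (measurable_prodMk_left (by measurability)),
    preimage_union, mk_preimage_prod_right_eq_if, mk_preimage_prod_right_eq_if]
  by_cases hneg : x ∈ Icc (-(1/2) : ℝ) 0 <;> by_cases hpos : x ∈ Icc (0 : ℝ) (1/2)
  · exact absurd (le_antisymm hneg.2 hpos.1) hx
  · have hI : x ∈ centeredUnitInterval := ⟨hneg.1, by linarith [hneg.2]⟩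
    simp only [if_pos hneg, if_neg hpos, union_empty, Real.volume_real_Icc, indicator_of_mem hI]
    norm_num
  · have hI : x ∈ centeredUnitInterval := ⟨by linarith [hpos.1], hpos.2⟩
    simp only [if_neg hneg, if_pos hpos, empty_union, Real.volume_real_Icc, indicator_of_mem hI]
    norm_num
  · have hI : x ∉ centeredUnitInterval := fun h =>
      (le_or_gt x 0).elim (fun h0 => hneg ⟨h.1, h0⟩) (fun h0 => hpos ⟨h0.le, h.2⟩)
    simp only [if_neg hneg, if_neg hpos, union_empty, measureReal_empty, indicator_of_notMem hI,
      zero_smul]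

lemma swap_mem_diagonalSquares {p : ℝ × ℝ} : p.swap ∈ diagonalSquares ↔ p ∈ diagonalSquares := by
  simp only [diagonalSquares_eq, mem_inter_iff, mem_prod, mem_ofPred_eq, Prod.fst_swap,
    Prod.snd_swap, mul_comm, and_comm]

lemma diagonalSquares_mem_gammaBar :
    InGammaBar1 (centeredUnitInterval.indicator fun _ => 1)
      (centeredUnitInterval.indicator fun _ => 1)
      ((centeredUnitInterval ×ˢ centeredUnitInterval).indicator fun _ => 2)
      (diagonalSquares.indicator fun _ => 2) := by
  have hsub : diagonalSquares ⊆ centeredUnitInterval ×ˢ centeredUnitInterval :=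
    diagonalSquares_eq ▸ inter_subset_left
  have hfinite : volume diagonalSquares ≠ ⊤ :=
    ((measure_mono hsub).trans_lt (isCompact_Icc.prod isCompact_Icc).measure_lt_top).ne
  refine ⟨⟨?_, ?_, ?_, ?_⟩, ?_⟩
  · exact (integrable_indicator_iff (by measurability)).2 (integrableOn_const hfinite)
  · exact .of_forall fun p => indicator_nonneg (fun _ _ => zero_le_two) p
  · filter_upwards [Measure.ae_ne volume 0] with x hx
    exact integral_indicator_diagonalSquares_slice hx
  · filter_upwards [Measure.ae_ne volume 0] with y hy
    have hswap : (fun x => diagonalSquares.indicator (fun _ => (2 : ℝ)) (x, y)) =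
        fun x => diagonalSquares.indicator (fun _ => 2) (y, x) := by
      ext x
      simp only [indicator_apply, ← swap_mem_diagonalSquares (p := (x, y)), Prod.swap_prod_mk]
    rw [hswap]
    exact integral_indicator_diagonalSquares_slice hy
  · exact .of_forall fun p => indicator_le_indicator_of_subset hsub (fun _ => zero_le_two) p

theorem checkerboard_optimal :
    InGammaBar1 ((Set.Icc (-(1/2) : ℝ) (1/2)).indicator fun _ => 1)
      ((Set.Icc (-(1/2) : ℝ) (1/2)).indicator fun _ => 1)
      ((Set.Icc (-(1/2) : ℝ) (1/2) ×ˢ Set.Icc (-(1/2) : ℝ) (1/2)).indicator fun _ => 2)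
      (((Set.Icc (-(1/2) : ℝ) 0 ×ˢ Set.Icc (-(1/2) : ℝ) 0) ∪
        (Set.Icc (0 : ℝ) (1/2) ×ˢ Set.Icc (0 : ℝ) (1/2))).indicator fun _ => 2) ∧
    ∀ k, InGammaBar1 ((Set.Icc (-(1/2) : ℝ) (1/2)).indicator fun _ => 1)
        ((Set.Icc (-(1/2) : ℝ) (1/2)).indicator fun _ => 1)
        ((Set.Icc (-(1/2) : ℝ) (1/2) ×ˢ Set.Icc (-(1/2) : ℝ) (1/2)).indicator fun _ => 2) k →
      Icost1 (fun p => (1/2) * |p.1 - p.2| ^ 2)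
        ((((Set.Icc (-(1/2) : ℝ) 0 ×ˢ Set.Icc (-(1/2) : ℝ) 0) ∪
          (Set.Icc (0 : ℝ) (1/2) ×ˢ Set.Icc (0 : ℝ) (1/2))).indicator fun _ => 2)) ≤
        Icost1 (fun p => (1/2) * |p.1 - p.2| ^ 2) k := by
  have hK : IsCompact (centeredUnitInterval ×ˢ centeredUnitInterval) :=
    isCompact_Icc.prod isCompact_Icc
  have hh := diagonalSquares_mem_gammaBar
  refine ⟨hh, fun k hk => ?_⟩
  have hhK := ae_eq_zero_off_of_le_indicator hh.1.2.1 hh.2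
  have hkK := ae_eq_zero_off_of_le_indicator hk.1.2.1 hk.2
  rw [Icost1_half_sq_dist_eq hK hh.1 hhK, Icost1_half_sq_dist_eq hK hk.1 hkK]
  refine sub_le_sub_left (integral_mono_ae ?_ ?_ ?_) _
  · exact Integrable.continuous_mul_of_ae_eq_zero_off hK (by fun_prop) hk.1.1 hkK
  · exact Integrable.continuous_mul_of_ae_eq_zero_off hK (by fun_prop) hh.1.1 hhK
  · filter_upwards [hk.1.2.1, hk.2] with p hp0 hple
    rw [diagonalSquares_eq]
    exact mul_le_mul_indicator_inter_nonneg (q := fun p => p.1 * p.2) hp0 hple
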